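/- Let $K \subset \mathbb{R}^n$ be a symmetric convex body with $M = \int_{S^{n-1}}\|x\|_K d\nu_n$ and $b = \max_{S^{n-1}}\|\cdot\|_K$ attained at the unit vector $e_1$, and let $\epsilon \in (0,1)$. Then for every integer $k$, $\nu_{n,k}(\{F \in G_{n,k} : \forall x \in F \cap S^{n-1},\ \|x\|_K < (1+\epsilon)M\}) \le \nu_n(\{x \in S^{n-1} : |P_{V_0}(x)| < (1+\epsilon)\tfrac{M}{b}\})$ for any fixed $k$-dimensional subspace $V_0$. -/

import Mathlib

noncomputable section
open MeasureTheory Metric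
open scoped ENNReal RealInnerProductSpace

/-- `Euc n` is the Euclidean space `ℝⁿ`. -/
abbrev Euc (n : ℕ) := EuclideanSpace ℝ (Fin n)

/-- The unit sphere `S^{n-1} ⊂ ℝⁿ`. -/
abbrev Sph (n : ℕ) := Metric.sphere (0 : Euc n) 1

/-- A rotation (linear isometry) of `ℝⁿ` restricted to the unit sphere. -/
def sphereRot {n : ℕ} (g : Euc n ≃ₗᵢ[ℝ] Euc n) (x : Sph n) : Sph n :=
  ⟨g x, by
    have hx : ‖(x : Euc n)‖ = 1 := by simpa using mem_sphere_zero_iff_norm.mp x.2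
    simp [mem_sphere_zero_iff_norm, g.norm_map, hx]⟩

/-- `ν` is the normalized Haar (uniform, rotation invariant probability) measure
on the unit sphere. -/
def IsHaarSphere {n : ℕ} (ν : Measure (Sph n)) : Prop :=
  IsProbabilityMeasure ν ∧ ∀ g : Euc n ≃ₗᵢ[ℝ] Euc n, ν.map (sphereRot g) = ν

/-- `projNorm V x = |P_V x|`, the Euclidean norm of the orthogonal projection of `x`
onto the subspace `V`. -/
def projNorm {n : ℕ} (V : Submodule ℝ (Euc n)) (x : Euc n) : ℝ :=
  ‖(V.orthogonalProjectionOnto x : Euc n)‖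

/-- The orthogonal projection onto `V` as a continuous linear map `ℝⁿ → ℝⁿ`. -/
def projCLM {n : ℕ} (V : Submodule ℝ (Euc n)) : Euc n →L[ℝ] Euc n :=
  V.subtypeL.comp V.orthogonalProjectionOnto

/-- The Grassmannian `G_{n,k}` of `k`-dimensional linear subspaces of `ℝⁿ`. -/
def Gr (n k : ℕ) := {V : Submodule ℝ (Euc n) // Module.finrank ℝ V = k}

/-- Borel measurable structure on the Grassmannian, induced by the embedding
`V ↦ P_V` into the space of continuous linear maps. -/
instance {n k : ℕ} : MeasurableSpace (Gr n k) :=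
  MeasurableSpace.comap (fun V => projCLM V.1) (borel _)

/-- The action of a rotation of `ℝⁿ` on the Grassmannian. -/
def grRot {n k : ℕ} (g : Euc n ≃ₗᵢ[ℝ] Euc n) (V : Gr n k) : Gr n k :=
  ⟨V.1.map g.toLinearEquiv.toLinearMap,
    (LinearEquiv.finrank_map_eq g.toLinearEquiv V.1).trans V.2⟩

/-- `μ` is the normalized Haar (rotation invariant probability) measure on the
Grassmannian `G_{n,k}`. -/
def IsHaarGrass {n k : ℕ} (μ : Measure (Gr n k)) : Prop :=
  IsProbabilityMeasure μ ∧ ∀ g : Euc n ≃ₗᵢ[ℝ] Euc n, μ.map (grRot g) = μ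

/-
`‖·‖_K` is sublinear, bounded by `b‖·‖` and equal to `b` at the unit vector `e₁`, so it
dominates the linear form `b⟪e₁, ·⟫`. Hence if every unit vector `x` of `F` has
`‖x‖_K < (1+ε)M`, testing on the normalised projection of `e₁` onto `F` gives
`|P_F e₁| < (1+ε)M/b`. By Fubini on `S^{n-1} × G_{n,k}` and the transitivity of the orthogonal
group on unit vectors and on `k`-dimensional subspaces, `|P_F e₁|` for Haar-random `F` has the
same law as `|P_{V₀} x|` for Haar-random `x`.
-/

open Module Filter Topology

section Gauge

variable {E : Type*} [NormedAddCommGroup E] [InnerProductSpace ℝ E] {K : Set E}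

lemma gauge_le_mul_norm_of_forall_norm_eq_one {b : ℝ} (hmax : ∀ y : E, ‖y‖ = 1 → gauge K y ≤ b)
    (y : E) : gauge K y ≤ b * ‖y‖ := by
  rcases eq_or_ne y 0 with rfl | hy
  · simp
  have hy' : ‖y‖ ≠ 0 := norm_ne_zero_iff.mpr hy
  calc gauge K y = ‖y‖ * gauge K (‖y‖⁻¹ • y) := by
        rw [← smul_eq_mul, ← gauge_smul_of_nonneg (norm_nonneg y), smul_inv_smul₀ hy']
    _ ≤ ‖y‖ * b := by
        gcongr
        exact hmax _ (by rw [norm_smul, norm_inv, norm_norm, inv_mul_cancel₀ hy'])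
    _ = b * ‖y‖ := mul_comm _ _

/- Write `u = (u - t • x) + t • x`; subadditivity and `‖y‖ ≤ (‖y‖² + 1) / 2` give
`b⟪u, x⟫ - t b ‖x‖² / 2 ≤ gauge K x` for all `t > 0`. -/
lemma mul_inner_le_gauge (hK : Convex ℝ K) (hK₀ : Absorbent ℝ K) {u : E} (hu : ‖u‖ = 1)
    (hmax : ∀ y : E, ‖y‖ = 1 → gauge K y ≤ gauge K u) (x : E) :
    gauge K u * ⟪u, x⟫ ≤ gauge K x := by
  set b := gauge K u
  have hb : 0 ≤ b := gauge_nonneg u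
  have hbound : ∀ t : ℝ, 0 < t → b * ⟪u, x⟫ - t * (b * ‖x‖ ^ 2 / 2) ≤ gauge K x := by
    intro t ht
    have hsplit : b ≤ gauge K (u - t • x) + t * gauge K x := by
      calc b = gauge K ((u - t • x) + t • x) := by rw [sub_add_cancel]
        _ ≤ gauge K (u - t • x) + gauge K (t • x) := gauge_add_le hK hK₀ _ _
        _ = gauge K (u - t • x) + t * gauge K x := by rw [gauge_smul_of_nonneg ht.le, smul_eq_mul]
    have hnorm : ‖u - t • x‖ ^ 2 = 1 - 2 * t * ⟪u, x⟫ + t ^ 2 * ‖x‖ ^ 2 := by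
      rw [norm_sub_sq_real, hu, real_inner_smul_right, norm_smul, Real.norm_of_nonneg ht.le]
      ring
    have hle : gauge K (u - t • x) ≤ b * ((‖u - t • x‖ ^ 2 + 1) / 2) :=
      (gauge_le_mul_norm_of_forall_norm_eq_one hmax _).trans <|
        mul_le_mul_of_nonneg_left (by nlinarith [sq_nonneg (‖u - t • x‖ - 1)]) hb
    rw [hnorm] at hle
    have : t * (b * ⟪u, x⟫ - t * (b * ‖x‖ ^ 2 / 2)) ≤ t * gauge K x := by nlinarith
    exact le_of_mul_le_mul_left this ht
  have hlim : Tendsto (fun t : ℝ => b * ⟪u, x⟫ - t * (b * ‖x‖ ^ 2 / 2)) (𝓝[>] 0)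
      (𝓝 (b * ⟪u, x⟫)) := by
    refine tendsto_nhdsWithin_of_tendsto_nhds ?_
    exact (continuous_const.sub (continuous_id.mul continuous_const)).tendsto' _ _ (by simp)
  exact le_of_tendsto hlim (eventually_nhdsWithin_of_forall fun t ht => hbound t ht)

end Gauge

section Projection

variable {n : ℕ}

lemma projNorm_map (g : Euc n ≃ₗᵢ[ℝ] Euc n) (V : Submodule ℝ (Euc n)) (x : Euc n) :
    projNorm (V.map g.toLinearEquiv.toLinearMap) x = projNorm V (g.symm x) := by
  change ‖(V.map g.toLinearEquiv.toLinearMap).starProjection x‖ = ‖V.starProjection (g.symm x)‖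
  rw [Submodule.starProjection_map_apply, g.norm_map]

lemma mul_projNorm_lt_of_forall_gauge_lt {K : Set (Euc n)} (hK : Convex ℝ K)
    (hK₀ : Absorbent ℝ K) {u : Euc n} (hu : ‖u‖ = 1)
    (hmax : ∀ y : Euc n, ‖y‖ = 1 → gauge K y ≤ gauge K u) (V : Submodule ℝ (Euc n))
    {r : ℝ} (hr : 0 < r) (h : ∀ x ∈ V, ‖x‖ = 1 → gauge K x < r) :
    gauge K u * projNorm V u < r := by
  set v := V.starProjection u
  have hv : projNorm V u = ‖v‖ := rfl
  rcases eq_or_ne v 0 with hv0 | hv0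
  · rwa [hv, hv0, norm_zero, mul_zero]
  have hv' : ‖v‖ ≠ 0 := norm_ne_zero_iff.mpr hv0
  have hPv : V.starProjection v = v :=
    Submodule.starProjection_eq_self_iff.mpr (V.starProjection_apply_mem u)
  have hinner : ⟪u, ‖v‖⁻¹ • v⟫ = ‖v‖ := by
    have : ⟪u, v⟫ = ‖v‖ ^ 2 := by
      calc ⟪u, v⟫ = ⟪u, V.starProjection v⟫ := by rw [hPv]
        _ = ⟪v, v⟫ := (V.inner_starProjection_left_eq_right u v).symm
        _ = ‖v‖ ^ 2 := real_inner_self_eq_norm_sq v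
    rw [real_inner_smul_right, this]
    field_simp
  calc gauge K u * projNorm V u = gauge K u * ⟪u, ‖v‖⁻¹ • v⟫ := by rw [hinner, hv]
    _ ≤ gauge K (‖v‖⁻¹ • v) := mul_inner_le_gauge hK hK₀ hu hmax _
    _ < r := h _ (V.smul_mem _ (V.starProjection_apply_mem u))
        (by rw [norm_smul, norm_inv, norm_norm, inv_mul_cancel₀ hv'])

end Projection

lemma exists_linearIsometryEquiv_map_eq {E : Type*} [NormedAddCommGroup E] [InnerProductSpace ℝ E]
    [FiniteDimensional ℝ E] (V W : Submodule ℝ E) (h : finrank ℝ V = finrank ℝ W) :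
    ∃ g : E ≃ₗᵢ[ℝ] E, V.map g.toLinearEquiv.toLinearMap = W := by
  let e : V ≃ₗᵢ[ℝ] W := (stdOrthonormalBasis ℝ V).repr.trans
    ((stdOrthonormalBasis ℝ W).reindex (finCongr h.symm)).repr.symm
  let L : V →ₗᵢ[ℝ] E := W.subtypeₗᵢ.comp e.toLinearIsometry
  let g := L.extend.toLinearIsometryEquiv rfl
  have hg : ∀ v : V, g v = L v := L.extend_apply
  refine ⟨g, Submodule.eq_of_le_of_finrank_eq ?_ ?_⟩
  · rintro _ ⟨v, hv, rfl⟩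
    change g v ∈ W
    rw [hg ⟨v, hv⟩]
    exact (e ⟨v, hv⟩).2
  · rw [LinearEquiv.finrank_map_eq, h]

lemma exists_linearIsometryEquiv_apply_eq {E : Type*} [NormedAddCommGroup E]
    [InnerProductSpace ℝ E] [CompleteSpace E] {x y : E} (h : ‖x‖ = ‖y‖) :
    ∃ g : E ≃ₗᵢ[ℝ] E, g x = y :=
  ⟨(ℝ ∙ (x - y))ᗮ.reflection, Submodule.reflection_sub h⟩

section Measurability

variable {n k : ℕ}

-- The σ-algebra pulled back to `Gr n k` by its `MeasurableSpace` instance.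
local instance : MeasurableSpace (Euc n →L[ℝ] Euc n) := borel _
local instance : BorelSpace (Euc n →L[ℝ] Euc n) := ⟨rfl⟩

lemma projCLM_map (g : Euc n ≃ₗᵢ[ℝ] Euc n) (V : Submodule ℝ (Euc n)) :
    projCLM (V.map g.toLinearEquiv.toLinearMap) =
      g.toContinuousLinearEquiv.toContinuousLinearMap ∘L projCLM V ∘L
        g.symm.toContinuousLinearEquiv.toContinuousLinearMap :=
  ContinuousLinearMap.ext fun x => Submodule.starProjection_map_apply g V x

lemma measurable_projCLM : Measurable fun F : Gr n k => projCLM F.1 := comap_measurable _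

lemma measurable_grRot (g : Euc n ≃ₗᵢ[ℝ] Euc n) : Measurable (grRot (k := k) g) := by
  refine measurable_comap_iff.mpr ?_
  have hcont : Continuous fun A : Euc n →L[ℝ] Euc n =>
      g.toContinuousLinearEquiv.toContinuousLinearMap ∘L A ∘L
        g.symm.toContinuousLinearEquiv.toContinuousLinearMap := by fun_prop
  have hcomp : (fun F : Gr n k => projCLM F.1) ∘ grRot g =
      (fun A : Euc n →L[ℝ] Euc n => g.toContinuousLinearEquiv.toContinuousLinearMap ∘L A ∘L
        g.symm.toContinuousLinearEquiv.toContinuousLinearMap) ∘ fun F : Gr n k => projCLM F.1 :=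
    funext fun F => projCLM_map g F.1
  rw [hcomp]
  exact hcont.measurable.comp measurable_projCLM

lemma measurable_sphereRot (g : Euc n ≃ₗᵢ[ℝ] Euc n) : Measurable (sphereRot g) :=
  (g.continuous.comp continuous_subtype_val).subtype_mk _ |>.measurable

lemma measurable_projNorm_sphere (V : Submodule ℝ (Euc n)) :
    Measurable fun x : Sph n => projNorm V x :=
  ((projCLM V).continuous.comp continuous_subtype_val).norm.measurable

lemma measurable_projNorm_apply (x : Euc n) : Measurable fun F : Gr n k => projNorm F.1 x :=
  (continuous_id.clm_apply continuous_const).norm.measurable.comp (measurable_projCLM (k := k))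

lemma measurableSet_projNorm_mem {S : Set ℝ} (hS : MeasurableSet S) :
    MeasurableSet {p : Sph n × Gr n k | projNorm p.2.1 p.1 ∈ S} := by
  have hpair : Measurable fun p : Sph n × Gr n k => (projCLM p.2.1, (p.1 : Euc n)) :=
    (measurable_projCLM.comp measurable_snd).prodMk
      (continuous_subtype_val.measurable.comp measurable_fst)
  have happly : Continuous fun q : (Euc n →L[ℝ] Euc n) × Euc n => ‖q.1 q.2‖ :=
    isBoundedBilinearMap_apply.continuous.norm
  exact (happly.measurable.comp hpair) hS

end Measurability

section Equidistribution

variable {n k : ℕ} {S : Set ℝ}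

lemma IsHaarSphere.measure_projNorm_mem_congr {ν : Measure (Sph n)} (hν : IsHaarSphere ν)
    (hS : MeasurableSet S) {V W : Submodule ℝ (Euc n)} (hVW : finrank ℝ V = finrank ℝ W) :
    ν {x : Sph n | projNorm V x ∈ S} = ν {x : Sph n | projNorm W x ∈ S} := by
  obtain ⟨g, rfl⟩ := exists_linearIsometryEquiv_map_eq V W hVW
  have hg : MeasurePreserving (sphereRot g) ν ν := ⟨measurable_sphereRot g, hν.2 g⟩
  have hW : MeasurableSet {x : Sph n | projNorm (V.map g.toLinearEquiv.toLinearMap) x ∈ S} :=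
    measurable_projNorm_sphere _ hS
  rw [← hg.measure_preimage hW.nullMeasurableSet]
  congr 1
  ext x
  change projNorm V x ∈ S ↔ projNorm (V.map g.toLinearEquiv.toLinearMap) (g x) ∈ S
  rw [projNorm_map, g.symm_apply_apply]

lemma IsHaarGrass.measure_projNorm_mem_congr {μ : Measure (Gr n k)} (hμ : IsHaarGrass μ)
    (hS : MeasurableSet S) {x y : Euc n} (hxy : ‖x‖ = ‖y‖) :
    μ {F : Gr n k | projNorm F.1 x ∈ S} = μ {F : Gr n k | projNorm F.1 y ∈ S} := by
  obtain ⟨g, rfl⟩ := exists_linearIsometryEquiv_apply_eq hxy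
  have hg : MeasurePreserving (grRot g) μ μ := ⟨measurable_grRot g, hμ.2 g⟩
  have hy : MeasurableSet {F : Gr n k | projNorm F.1 (g x) ∈ S} := measurable_projNorm_apply _ hS
  rw [← hg.measure_preimage hy.nullMeasurableSet]
  congr 1
  ext F
  change projNorm F.1 x ∈ S ↔ projNorm (F.1.map g.toLinearEquiv.toLinearMap) (g x) ∈ S
  rw [projNorm_map, g.symm_apply_apply]

lemma IsHaarGrass.measure_projNorm_mem_eq {μ : Measure (Gr n k)} (hμ : IsHaarGrass μ)
    {ν : Measure (Sph n)} (hν : IsHaarSphere ν) (hS : MeasurableSet S) {e : Euc n}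
    (he : ‖e‖ = 1) {V₀ : Submodule ℝ (Euc n)} (hV₀ : finrank ℝ V₀ = k) :
    μ {F : Gr n k | projNorm F.1 e ∈ S} = ν {x : Sph n | projNorm V₀ x ∈ S} := by
  have := hμ.1
  have := hν.1
  have hA := measurableSet_projNorm_mem (n := n) (k := k) hS
  calc μ {F : Gr n k | projNorm F.1 e ∈ S}
      = ∫⁻ _x : Sph n, μ {F : Gr n k | projNorm F.1 e ∈ S} ∂ν := by simp
    _ = ∫⁻ x : Sph n, μ {F : Gr n k | projNorm F.1 x ∈ S} ∂ν := lintegral_congr fun x =>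
        hμ.measure_projNorm_mem_congr hS (he.trans (norm_eq_of_mem_sphere x).symm)
    _ = (ν.prod μ) {p : Sph n × Gr n k | projNorm p.2.1 p.1 ∈ S} := (Measure.prod_apply hA).symm
    _ = ∫⁻ F : Gr n k, ν {x : Sph n | projNorm F.1 x ∈ S} ∂μ := Measure.prod_apply_symm hA
    _ = ∫⁻ _F : Gr n k, ν {x : Sph n | projNorm V₀ x ∈ S} ∂μ := lintegral_congr fun F =>
        hν.measure_projNorm_mem_congr hS (F.2.trans hV₀.symm)
    _ = ν {x : Sph n | projNorm V₀ x ∈ S} := by simp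

end Equidistribution

lemma integral_gauge_sphere_pos {n : ℕ} {K : Set (Euc n)} (hK : Convex ℝ K) (hK₀ : K ∈ 𝓝 0)
    (hKb : Bornology.IsBounded K) (ν : Measure (Sph n)) [IsFiniteMeasure ν] [NeZero ν] :
    0 < ∫ x : Sph n, gauge K x ∂ν := by
  have hcont : Continuous fun x : Sph n => gauge K x :=
    (continuous_gauge hK hK₀).comp continuous_subtype_val
  have hsupp : Function.support (fun x : Sph n => gauge K x) = Set.univ :=
    Set.eq_univ_of_forall fun x => ((gauge_pos (absorbent_nhds_zero hK₀)
      (NormedSpace.isVonNBounded_of_isBounded ℝ hKb)).2 (ne_zero_of_mem_unit_sphere x)).ne'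
  rw [integral_pos_iff_support_of_nonneg (fun x => gauge_nonneg _)
    (hcont.integrable_of_hasCompactSupport (.of_compactSpace _)), hsupp]
  exact Measure.measure_univ_pos.mpr (NeZero.ne ν)

theorem stmt_16_general (n k : ℕ) [NeZero n]
    (K : Set (Euc n)) (hKconv : Convex ℝ K) (hKcomp : IsCompact K)
    (hK0 : (0 : Euc n) ∈ interior K)
    (ν : Measure (Sph n)) (hν : IsHaarSphere ν)
    (μ : Measure (Gr n k)) (hμ : IsHaarGrass μ)
    (M b ε : ℝ) (hε : ε ∈ Set.Ioo (0 : ℝ) 1)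
    (hM : M = ∫ x : Sph n, gauge K (x : Euc n) ∂ν)
    (hb : b = gauge K (EuclideanSpace.single (0 : Fin n) 1))
    (hmax : ∀ x : Euc n, ‖x‖ = 1 → gauge K x ≤ b)
    (V₀ : Submodule ℝ (Euc n)) (hV₀ : Module.finrank ℝ V₀ = k) :
    μ {F : Gr n k | ∀ x : Euc n, x ∈ F.1 → ‖x‖ = 1 → gauge K x < (1 + ε) * M}
      ≤ ν {x : Sph n | projNorm V₀ (x : Euc n) < (1 + ε) * M / b} := by
  set e₁ : Euc n := EuclideanSpace.single 0 1
  have he₁ : ‖e₁‖ = 1 := by simp [e₁]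
  have hK₀ : K ∈ 𝓝 0 := mem_interior_iff_mem_nhds.mp hK0
  have hKabs : Absorbent ℝ K := absorbent_nhds_zero hK₀
  have hKbdd : Bornology.IsVonNBounded ℝ K :=
    NormedSpace.isVonNBounded_of_isBounded ℝ hKcomp.isBounded
  have hb_pos : 0 < b := hb ▸ (gauge_pos hKabs hKbdd).2 (by simp [e₁])
  have := hν.1
  have hr : 0 < (1 + ε) * M :=
    mul_pos (by linarith [hε.1]) (hM ▸ integral_gauge_sphere_pos hKconv hK₀ hKcomp.isBounded ν)
  calc μ {F : Gr n k | ∀ x : Euc n, x ∈ F.1 → ‖x‖ = 1 → gauge K x < (1 + ε) * M}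
      ≤ μ {F : Gr n k | projNorm F.1 e₁ ∈ Set.Iio ((1 + ε) * M / b)} := by
        refine measure_mono fun F hF => ?_
        change projNorm F.1 e₁ < (1 + ε) * M / b
        rw [lt_div_iff₀' hb_pos, hb]
        exact mul_projNorm_lt_of_forall_gauge_lt hKconv hKabs he₁ (hb ▸ hmax) F.1 hr hF
    _ = ν {x : Sph n | projNorm V₀ (x : Euc n) < (1 + ε) * M / b} :=
        hμ.measure_projNorm_mem_eq hν measurableSet_Iio he₁ hV₀

/-- The Grassmannian measure of subspaces all of whose unit vectors have `‖x‖_K < (1+ε)M`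
is at most the spherical measure of `{x : |P_{V₀} x| < (1+ε) M / b}`. -/
theorem stmt_16 (n k : ℕ) [NeZero n] (hkn : k ≤ n)
    (K : Set (Euc n)) (hKconv : Convex ℝ K) (hKsymm : K = -K) (hKcomp : IsCompact K)
    (hK0 : (0 : Euc n) ∈ interior K)
    (ν : Measure (Sph n)) (hν : IsHaarSphere ν)
    (μ : Measure (Gr n k)) (hμ : IsHaarGrass μ)
    (M b ε : ℝ) (hε : ε ∈ Set.Ioo (0 : ℝ) 1)
    (hM : M = ∫ x : Sph n, gauge K (x : Euc n) ∂ν)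
    (hb : b = gauge K (EuclideanSpace.single (0 : Fin n) 1))
    (hmax : ∀ x : Euc n, ‖x‖ = 1 → gauge K x ≤ b)
    (V₀ : Submodule ℝ (Euc n)) (hV₀ : Module.finrank ℝ V₀ = k) :
    μ {F : Gr n k | ∀ x : Euc n, x ∈ F.1 → ‖x‖ = 1 → gauge K x < (1 + ε) * M}
      ≤ ν {x : Sph n | projNorm V₀ (x : Euc n) < (1 + ε) * M / b} :=
  stmt_16_general n k K hKconv hKcomp hK0 ν hν μ hμ M b ε hε hM hb hmax V₀ hV₀
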